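/- Let n ≥ 1, let p be an integer with 1 ≤ p ≤ n, let A and D be n×n real matrices, and suppose x ∈ ℝⁿ satisfies x_i − x_j ≥ D(i,j) for all i, j and (A ⊗_p x)_i = λ + x_i for all i, where λ ∈ ℝ. Define L(i,j) := ⊕_p(l ↦ A(i,l) + D(l,j)), U(i,j) := ⊕_p(l ↦ A(i,l) − D(j,l)), l := max{L(1,1), …, L(n,n)}, u := min{U(1,1), …, U(n,n)}, P(i,j) := A(i,j) + D(j,i) and Q(i,j) := A(i,j) − D(i,j). If P(i,j) > u or Q(i,j) < l, then (i,j) is inactive, i.e., (A ⊗_p x)_i ≠ A(i,j) + x_j. -/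

import Mathlib

/-- The maxmin-`p` value of `s : Fin n → ℝ`: the `p`-th smallest element (1-indexed) of the
multiset `{s 0, …, s (n-1)}`, counted with multiplicity. -/
noncomputable def maxmin {n : ℕ} (p : ℕ) (s : Fin n → ℝ) : ℝ :=
  (Multiset.sort (Multiset.map s (Finset.univ : Finset (Fin n)).val) (· ≤ ·)).getD (p - 1) 0

/-- The maxmin-`p` matrix-vector product: `(A ⊗_p x)_i = ⊕_p (j ↦ A i j + x j)`. -/
noncomputable def mmProd {n : ℕ} (p : ℕ) (A : Fin n → Fin n → ℝ) (x : Fin n → ℝ) :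
    Fin n → ℝ :=
  fun i => maxmin p (fun j => A i j + x j)

/-!
Since `x ∈ Zone(D)`, the entries `A k l + x l - x k` lie between `A k l + D l k` and
`A k l - D k l`. As `⊕_p` is monotone and commutes with adding constants, every eigenvalue
satisfies `l ≤ λ ≤ u`. An active entry `(i, j)` forces `λ = A i j + x j - x i`, and then
`P i j > u` contradicts `x j - x i ≥ D j i`, while `Q i j < l` contradicts `x i - x j ≥ D i j`.
-/

open Finset

theorem List.Pairwise.getElem_le_iff_lt_countP {α : Type*} [LinearOrder α] {l : List α}
    (hl : l.Pairwise (· ≤ ·)) {k : ℕ} (hk : k < l.length) (v : α) :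
    l[k] ≤ v ↔ k < l.countP (· ≤ v) := by
  constructor
  · intro hkv
    have hprefix : ∀ a ∈ l.take (k + 1), a ≤ v := by
      intro a ha
      obtain ⟨m, hm, rfl⟩ := List.getElem_of_mem ha
      rw [List.length_take] at hm
      rw [List.getElem_take]
      exact (hl.rel_get_of_le (a := ⟨m, by omega⟩) (b := ⟨k, hk⟩) (by simp; omega)).trans hkv
    calc k < (l.take (k + 1)).length := by simp; omega
      _ = (l.take (k + 1)).countP (· ≤ v) :=
        (List.countP_eq_length.mpr fun a ha => by simpa using hprefix a ha).symm
      _ ≤ l.countP (· ≤ v) := (List.take_sublist _ _).countP_le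
  · contrapose!
    intro hvk
    have hsuffix : (l.drop k).countP (· ≤ v) = 0 := by
      refine List.countP_eq_zero.mpr fun a ha => ?_
      obtain ⟨m, hm, rfl⟩ := List.getElem_of_mem ha
      rw [List.getElem_drop]
      have := hl.rel_get_of_le (a := ⟨k, hk⟩) (b := ⟨k + m, by simp at hm; omega⟩) (by simp)
      simpa using hvk.trans_le this
    calc l.countP (· ≤ v) = (l.take k).countP (· ≤ v) + (l.drop k).countP (· ≤ v) := by
          rw [← List.countP_append, List.take_append_drop]
      _ ≤ k := by
          rw [hsuffix, add_zero]
          exact List.countP_le_length.trans (by simp)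

section maxmin

variable {n p : ℕ}

theorem maxmin_le_iff (hp : p - 1 < n) (s : Fin n → ℝ) (v : ℝ) :
    maxmin p s ≤ v ↔ p - 1 < #{l | s l ≤ v} := by
  have hsorted := Multiset.pairwise_sort (Multiset.map s (univ : Finset (Fin n)).val) (· ≤ ·)
  have hlen : p - 1 < (Multiset.sort (Multiset.map s univ.val) (· ≤ ·)).length := by simpa
  rw [maxmin, List.getD_eq_getElem _ _ hlen, hsorted.getElem_le_iff_lt_countP hlen,
    ← Multiset.coe_countP, Multiset.sort_eq, Multiset.countP_map, ← filter_val, card_def]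

theorem maxmin_mono {s t : Fin n → ℝ} (h : s ≤ t) : maxmin p s ≤ maxmin p t := by
  by_cases hp : p - 1 < n
  · rw [maxmin_le_iff hp]
    refine ((maxmin_le_iff hp t _).mp le_rfl).trans_le (card_le_card fun l => ?_)
    simpa using (h l).trans
  · -- both sides are the default value `0` of `List.getD`
    simp only [maxmin]
    rw [List.getD_eq_default _ _ (by simpa using hp), List.getD_eq_default _ _ (by simpa using hp)]

theorem maxmin_add_const (hp : p - 1 < n) (s : Fin n → ℝ) (c : ℝ) :
    maxmin p (fun l => s l + c) = maxmin p s + c :=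
  eq_of_forall_ge_iff fun v => by
    simp only [maxmin_le_iff hp, ← le_sub_iff_add_le]

theorem maxmin_le_maxmin_add (hp : p - 1 < n) {s t : Fin n → ℝ} {c : ℝ}
    (h : ∀ l, s l ≤ t l + c) : maxmin p s ≤ maxmin p t + c :=
  (maxmin_mono h).trans_eq (maxmin_add_const hp t c)

variable {A D : Fin n → Fin n → ℝ} {x : Fin n → ℝ}

theorem mmProd_sub_le_maxmin_sub (hp : p - 1 < n) (hzone : ∀ i j, x i - x j ≥ D i j)
    (k : Fin n) : mmProd p A x k - x k ≤ maxmin p (fun l => A k l - D k l) :=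
  sub_le_iff_le_add.mpr <| maxmin_le_maxmin_add hp fun l => by linarith [hzone k l]

theorem maxmin_add_le_mmProd_sub (hp : p - 1 < n) (hzone : ∀ i j, x i - x j ≥ D i j)
    (k : Fin n) : maxmin p (fun l => A k l + D l k) ≤ mmProd p A x k - x k := by
  rw [sub_eq_add_neg]
  exact maxmin_le_maxmin_add hp fun l => by linarith [hzone l k]

end maxmin

theorem inactive_entry_of_PQ_general (n p : ℕ) (hn : 1 ≤ n) (hpn : p ≤ n)
    (A D : Fin n → Fin n → ℝ) (x : Fin n → ℝ) (lam : ℝ)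
    (hzone : ∀ i j, x i - x j ≥ D i j)
    (heig : ∀ i, mmProd p A x i = lam + x i)
    (i j : Fin n)
    (h : A i j + D j i >
          (Finset.univ : Finset (Fin n)).inf' ⟨⟨0, hn⟩, Finset.mem_univ _⟩
            (fun i => maxmin p (fun l => A i l - D i l)) ∨
         A i j - D i j <
          (Finset.univ : Finset (Fin n)).sup' ⟨⟨0, hn⟩, Finset.mem_univ _⟩
            (fun i => maxmin p (fun l => A i l + D l i))) :
    mmProd p A x i ≠ A i j + x j := by
  intro hactive
  have hp : p - 1 < n := by omega
  have hlam : lam = A i j + x j - x i := by linarith [heig i]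
  have hlam_le_u : lam ≤ univ.inf' ⟨⟨0, hn⟩, mem_univ _⟩
      (fun i => maxmin p (fun l => A i l - D i l)) :=
    le_inf' _ _ fun k _ => by linarith [heig k, mmProd_sub_le_maxmin_sub (A := A) hp hzone k]
  have hl_le_lam : univ.sup' ⟨⟨0, hn⟩, mem_univ _⟩
      (fun i => maxmin p (fun l => A i l + D l i)) ≤ lam :=
    sup'_le _ _ fun k _ => by linarith [heig k, maxmin_add_le_mmProd_sub (A := A) hp hzone k]
  rcases h with h | h <;> linarith [hzone i j, hzone j i]

/-- Let `L i j := ⊕_p(l ↦ A i l + D l j)`, `U i j := ⊕_p(l ↦ A i l − D j l)`,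
`l := max_i L i i`, `u := min_i U i i`, `P i j := A i j + D j i` and
`Q i j := A i j − D i j`. If `P i j > u` or `Q i j < l`, then `(i,j)` is inactive with
respect to `p` and any maxmin-`p` eigenvector `x ∈ Zone(D)`:
`(A ⊗_p x)_i ≠ A i j + x j`. -/
theorem inactive_entry_of_PQ (n p : ℕ) (hn : 1 ≤ n) (hp1 : 1 ≤ p) (hpn : p ≤ n)
    (A D : Fin n → Fin n → ℝ) (x : Fin n → ℝ) (lam : ℝ)
    (hzone : ∀ i j, x i - x j ≥ D i j)
    (heig : ∀ i, mmProd p A x i = lam + x i)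
    (i j : Fin n)
    (h : A i j + D j i >
          (Finset.univ : Finset (Fin n)).inf' ⟨⟨0, hn⟩, Finset.mem_univ _⟩
            (fun i => maxmin p (fun l => A i l - D i l)) ∨
         A i j - D i j <
          (Finset.univ : Finset (Fin n)).sup' ⟨⟨0, hn⟩, Finset.mem_univ _⟩
            (fun i => maxmin p (fun l => A i l + D l i))) :
    mmProd p A x i ≠ A i j + x j :=
  inactive_entry_of_PQ_general n p hn hpn A D x lam hzone heig i j h
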